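/- arXiv:2305.05446 — 2 statements merged into one kernel-verified Lean document; each statement's English description precedes it below -/
import Mathlib

section
/- In A₅, for any subgroup X of order 2, there exists a subgroup H of A₅ isomorphic to the dihedral group D₁₀ of order 10 containing X. -/
set_option maxRecDepth 100000

open Equiv Equiv.Perm

private def dihF : DihedralGroup 5 → Equiv.Perm (Fin 5)
  | .r i => (finRotate 5) ^ i.val
  | .sr i => (Equiv.swap 0 4 * Equiv.swap 1 3) * (finRotate 5) ^ i.val

private lemma dihF_mul : ∀ a b : DihedralGroup 5, dihF (a * b) = dihF a * dihF b := by decide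

private lemma dihF_inj : ∀ a b : DihedralGroup 5, dihF a = dihF b → a = b := by decide

private lemma dihF_sign : ∀ a : DihedralGroup 5, Equiv.Perm.sign (dihF a) = 1 := by decide

private def dihφ : DihedralGroup 5 →* alternatingGroup (Fin 5) where
  toFun a := ⟨dihF a, mem_alternatingGroup.2 (dihF_sign a)⟩
  map_one' := Subtype.ext (by decide)
  map_mul' a b := Subtype.ext (dihF_mul a b)

private lemma dihφ_inj : Function.Injective dihφ :=
  fun a b h => dihF_inj a b (congrArg Subtype.val h)

private lemma conj_invol : ∀ x : Equiv.Perm (Fin 5), x * x = 1 → x ≠ 1 →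
    Equiv.Perm.sign x = 1 →
    ∃ g : Equiv.Perm (Fin 5), Equiv.Perm.sign g = 1 ∧
      g * (Equiv.swap 0 4 * Equiv.swap 1 3) * g⁻¹ = x := by
  decide

/-- In `A₅`, any subgroup `X` of order 2 is contained in a subgroup `H` of order 10
isomorphic to the dihedral group of order 10. -/
theorem alternatingGroup_five_dihedral_over_involution
    (X : Subgroup (alternatingGroup (Fin 5))) (hX : Nat.card X = 2) :
    ∃ H : Subgroup (alternatingGroup (Fin 5)),
      X ≤ H ∧ Nat.card H = 10 ∧ Nonempty (H ≃* DihedralGroup 5) := by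
  -- pick a nontrivial element x of X
  have hXbot : X ≠ ⊥ := by
    intro h; rw [h] at hX; simp at hX
  obtain ⟨x, hxX, hx1⟩ := X.bot_or_exists_ne_one.resolve_left hXbot
  -- x has order 2
  have hx2 : x * x = 1 := by
    have h := pow_card_eq_one' (G := X) (x := ⟨x, hxX⟩)
    rw [hX] at h
    have := congrArg Subtype.val h
    simpa [pow_two] using this
  -- X = zpowers x
  have hXz : X = Subgroup.zpowers x := by
    have hle : Subgroup.zpowers x ≤ X := Subgroup.zpowers_le.2 hxX
    have hord : orderOf x = 2 := by
      have : x ^ 2 = 1 := by simpa [pow_two] using hx2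
      exact orderOf_eq_prime this hx1
    have hcard : Nat.card (Subgroup.zpowers x) = 2 := by
      rw [Nat.card_zpowers, hord]
    have : Nat.card X ≤ Nat.card (Subgroup.zpowers x) := by omega
    exact (Subgroup.eq_of_le_of_card_ge hle this).symm
  -- underlying permutation
  have hp2 : (x : Equiv.Perm (Fin 5)) * (x : Equiv.Perm (Fin 5)) = 1 := by
    exact_mod_cast congrArg Subtype.val hx2
  have hp1 : (x : Equiv.Perm (Fin 5)) ≠ 1 := by
    intro h; exact hx1 (Subtype.ext h)
  obtain ⟨g, hgsign, hgconj⟩ := conj_invol x hp2 hp1 (mem_alternatingGroup.1 x.2)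
  set G : alternatingGroup (Fin 5) := ⟨g, mem_alternatingGroup.2 hgsign⟩ with hG
  -- the subgroup H
  set ψ : DihedralGroup 5 →* alternatingGroup (Fin 5) :=
    (MulAut.conj G).toMonoidHom.comp dihφ with hψ
  have hψinj : Function.Injective ψ :=
    (MulAut.conj G).injective.comp dihφ_inj
  refine ⟨ψ.range, ?_, ?_, ?_⟩
  · rw [hXz]
    refine Subgroup.zpowers_le.2 ⟨DihedralGroup.sr 0, ?_⟩
    apply Subtype.ext
    have : dihF (DihedralGroup.sr 0) = Equiv.swap 0 4 * Equiv.swap 1 3 := by decide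
    simp only [hψ, MonoidHom.comp_apply, MulEquiv.toMonoidHom_eq_coe,
      MonoidHom.coe_coe, MulAut.conj_apply]
    show (G : Equiv.Perm (Fin 5)) * (dihφ (DihedralGroup.sr 0) : Equiv.Perm (Fin 5)) *
      (G⁻¹ : alternatingGroup (Fin 5)) = (x : Equiv.Perm (Fin 5))
    rw [show (dihφ (DihedralGroup.sr 0) : Equiv.Perm (Fin 5)) =
      Equiv.swap 0 4 * Equiv.swap 1 3 from this]
    simpa [hG] using hgconj
  · have : Nat.card ψ.range = Nat.card (DihedralGroup 5) :=
      Nat.card_congr (Equiv.ofInjective ψ hψinj).symm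
    rw [this, Nat.card_eq_fintype_card]
    decide
  · exact ⟨(MonoidHom.ofInjective hψinj).symm⟩
end

section
/- Let Λ be a ring, i an idempotent of Λ, and suppose i is primitive in the fixed-point subring Λ^P under an action of a group P on Λ by ring automorphisms. Then the module Λi (with Λ acting by left multiplication and P acting via the correspondence with right translation) is indecomposable as a module whenever End of it is local; specifically, the endomorphism ring of Λi as a Λ-P bimodule is isomorphic to (iΛi)^P, so if i is a primitive idempotent of Λ^P ∩ iΛi = (iΛi)^P then Λi is indecomposable. -/
/-!
An endomorphism `f` of the left ideal `Λi` is right multiplication by `a = f(i)`, and `a` lies in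
the corner `iΛi`; composing endomorphisms multiplies these values in the opposite order. Since `P`
fixes the generator `i`, `f` commutes with the `P`-action exactly when `a` is `P`-fixed. An
idempotent endomorphism therefore yields the orthogonal decomposition `i = a + (i - a)` in
`(iΛi)^P`, and primitivity of `i` forces `a = 0` or `a = i`.
-/

section

variable (F Λ : Type) [Field F] [Ring Λ] [Algebra F Λ]
variable (P : Type) [Group P]

/-- The action of `x ∈ P` on the left ideal `Λi`, induced by the algebra
automorphism `φ x` (which fixes `i`); this is the abstract version of the right
translation action. -/
def cornerAct (φ : P →* (Λ ≃ₐ[F] Λ)) (i : Λ) (hfix : ∀ x : P, φ x i = i) (x : P)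
    (v : Submodule.span Λ ({i} : Set Λ)) : Submodule.span Λ ({i} : Set Λ) :=
  ⟨φ x (v : Λ), by
    obtain ⟨a, ha⟩ := Submodule.mem_span_singleton.mp v.2
    rw [← ha, smul_eq_mul, map_mul, hfix]
    exact Submodule.mem_span_singleton.mpr ⟨φ x a, by rw [smul_eq_mul]⟩⟩

/-- The endomorphism ring of `Λi` as a `Λ`-`P`-bimodule: the `Λ`-linear
endomorphisms of `Λi` commuting with the `P`-action. -/
def bimoduleEnd (φ : P →* (Λ ≃ₐ[F] Λ)) (i : Λ) (hfix : ∀ x : P, φ x i = i) :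
    Subring (Module.End Λ (Submodule.span Λ ({i} : Set Λ))) where
  carrier := {f | ∀ (x : P) (v : Submodule.span Λ ({i} : Set Λ)),
    f (cornerAct F Λ P φ i hfix x v) = cornerAct F Λ P φ i hfix x (f v)}
  one_mem' := by intro x v; rfl
  mul_mem' := by
    intro f g hf hg x v
    simp only [Module.End.mul_apply]
    rw [hg x v, hf x (g v)]
  zero_mem' := by
    intro x v
    simp only [LinearMap.zero_apply]
    apply Subtype.ext
    simp [cornerAct]
  add_mem' := by
    intro f g hf hg x v
    simp only [LinearMap.add_apply]
    rw [hf x v, hg x v]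
    apply Subtype.ext
    simp [cornerAct, map_add]
  neg_mem' := by
    intro f hf x v
    simp only [LinearMap.neg_apply]
    rw [hf x v]
    apply Subtype.ext
    simp [cornerAct]

namespace IsIdempotentElem

variable {R : Type*} [Ring R] {e : R}

lemma mul_eq_of_mem_span_singleton (he : IsIdempotentElem e) {v : R} (hv : v ∈ R ∙ e) :
    v * e = v := by
  obtain ⟨r, rfl⟩ := Submodule.mem_span_singleton.mp hv
  rw [smul_eq_mul, mul_assoc, he.eq]

lemma coe_end_apply_eq_mul (he : IsIdempotentElem e) (f : Module.End R (R ∙ e)) (v : R ∙ e) :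
    (f v : R) = v * f ⟨e, Submodule.mem_span_singleton_self e⟩ := by
  set g : R ∙ e := ⟨e, Submodule.mem_span_singleton_self e⟩
  have hfg : (f g : R) = e * f g := by
    conv_lhs => rw [← show e • g = g from Subtype.ext he.eq, map_smul]
    rfl
  obtain ⟨r, rfl⟩ : ∃ r : R, r • g = v :=
    (Submodule.mem_span_singleton.mp v.2).imp fun r hr => Subtype.ext hr
  rw [map_smul, Submodule.coe_smul, Submodule.coe_smul, smul_eq_mul, smul_eq_mul, mul_assoc]
  exact congrArg (r * ·) hfg

lemma mul_end_apply_self_mul (he : IsIdempotentElem e) (f : Module.End R (R ∙ e)) :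
    e * f ⟨e, Submodule.mem_span_singleton_self e⟩ * e =
      f ⟨e, Submodule.mem_span_singleton_self e⟩ := by
  rw [← he.coe_end_apply_eq_mul f ⟨e, Submodule.mem_span_singleton_self e⟩,
    he.mul_eq_of_mem_span_singleton (Subtype.prop _)]

def endSpanSingletonEquiv (he : IsIdempotentElem e) :
    Module.End R (R ∙ e) ≃ {a : R // e * a * e = a} where
  toFun f := ⟨f ⟨e, Submodule.mem_span_singleton_self e⟩, he.mul_end_apply_self_mul f⟩
  invFun a :=
    have ha : (a : R) ∈ R ∙ e :=
      Submodule.mem_span_singleton.mpr ⟨a, ((Subsemigroup.mem_corner_iff he).mp ⟨a, a.2⟩).2⟩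
    (LinearMap.toSpanSingleton R (R ∙ e) ⟨a, ha⟩).domRestrict _
  left_inv f := LinearMap.ext fun v => Subtype.ext (he.coe_end_apply_eq_mul f v).symm
  right_inv a := Subtype.ext ((Subsemigroup.mem_corner_iff he).mp ⟨a, a.2⟩).1

lemma endSpanSingletonEquiv_mul (he : IsIdempotentElem e) (f g : Module.End R (R ∙ e)) :
    (he.endSpanSingletonEquiv (f * g) : R) =
      he.endSpanSingletonEquiv g * he.endSpanSingletonEquiv f :=
  he.coe_end_apply_eq_mul f _

end IsIdempotentElem

lemma mem_bimoduleEnd_iff (φ : P →* (Λ ≃ₐ[F] Λ)) (i : Λ) (hi : IsIdempotentElem i)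
    (hfix : ∀ x : P, φ x i = i) (f : Module.End Λ (Submodule.span Λ ({i} : Set Λ))) :
    f ∈ bimoduleEnd F Λ P φ i hfix ↔
      ∀ x : P, φ x (hi.endSpanSingletonEquiv f : Λ) = hi.endSpanSingletonEquiv f := by
  set a : Λ := (hi.endSpanSingletonEquiv f : Λ)
  have hia : i * a = a :=
    (hi.coe_end_apply_eq_mul f ⟨i, Submodule.mem_span_singleton_self i⟩).symm
  have hcomm : ∀ x v, f (cornerAct F Λ P φ i hfix x v) = cornerAct F Λ P φ i hfix x (f v) ↔
      φ x v * a = φ x v * φ x a := fun x v => by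
    rw [Subtype.ext_iff, hi.coe_end_apply_eq_mul f, ← map_mul,
      show (v : Λ) * a = f v from (hi.coe_end_apply_eq_mul f v).symm]
    rfl
  refine ⟨fun h x => ?_, fun h x v => (hcomm x v).mpr (by rw [h x])⟩
  have hgen := (hcomm x ⟨i, Submodule.mem_span_singleton_self i⟩).mp (h x _)
  calc φ x a = φ x i * φ x a := by rw [← map_mul, hia]
    _ = a := by rw [← hgen, hfix, hia]

def bimoduleEndEquiv (φ : P →* (Λ ≃ₐ[F] Λ)) (i : Λ) (hi : IsIdempotentElem i)
    (hfix : ∀ x : P, φ x i = i) :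
    bimoduleEnd F Λ P φ i hfix ≃ {a : Λ // i * a * i = a ∧ ∀ x : P, φ x a = a} :=
  (hi.endSpanSingletonEquiv.subtypeEquiv (mem_bimoduleEnd_iff F Λ P φ i hi hfix)).trans
    (Equiv.subtypeSubtypeEquivSubtypeInter _ _)

theorem bimodule_end_iso_and_indecomposable
    (φ : P →* (Λ ≃ₐ[F] Λ)) (i : Λ) (hi : i * i = i) (hfix : ∀ x : P, φ x i = i) :
    (∃ e : (bimoduleEnd F Λ P φ i hfix) ≃
        {a : Λ // i * a * i = a ∧ ∀ x : P, φ x a = a},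
      (∀ f, (e f : Λ) =
        ((f : Module.End Λ (Submodule.span Λ ({i} : Set Λ)))
          ⟨i, Submodule.mem_span_singleton_self i⟩ : Λ)) ∧
      (∀ f g, (e (f * g) : Λ) = (e g : Λ) * (e f : Λ)) ∧
      (∀ f g, (e (f + g) : Λ) = (e f : Λ) + (e g : Λ))) ∧
    ((∀ a b : Λ, (i * a * i = a ∧ ∀ x : P, φ x a = a) →
        (i * b * i = b ∧ ∀ x : P, φ x b = b) →
        a * a = a → b * b = b → a * b = 0 → b * a = 0 → a + b = i →
        a = 0 ∨ b = 0) →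
      ∀ f : (bimoduleEnd F Λ P φ i hfix), f * f = f → f = 0 ∨ f = 1) := by
  set E := bimoduleEndEquiv F Λ P φ i hi hfix
  have hE_mul : ∀ f g, (E (f * g) : Λ) = E g * E f := fun f g =>
    IsIdempotentElem.endSpanSingletonEquiv_mul hi f g
  refine ⟨⟨E, fun f => rfl, hE_mul, fun f g => rfl⟩, fun hprim f hf => ?_⟩
  obtain ⟨⟨a, hcorner, hfixa⟩, hEf⟩ : ∃ a, E f = a := ⟨_, rfl⟩
  obtain ⟨hia, hai⟩ := (Subsemigroup.mem_corner_iff hi).mp ⟨a, hcorner⟩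
  have ha : a * a = a := by
    simpa only [hEf, hf] using (hE_mul f f).symm
  rcases hprim a (i - a) ⟨hcorner, hfixa⟩
      ⟨by simp only [mul_sub, sub_mul, hi, hia, hai], fun x => by rw [map_sub, hfix, hfixa]⟩
      ha (IsIdempotentElem.sub ha hi hai hia) (by rw [mul_sub, hai, ha, sub_self])
      (by rw [sub_mul, hia, ha, sub_self]) (add_sub_cancel a i) with h | h
  · exact .inl (E.injective (hEf.trans (Subtype.ext h)))
  · exact .inr (E.injective (hEf.trans (Subtype.ext (sub_eq_zero.mp h).symm)))

end
end
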